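/- Under Assumptions 1 and 2, the Lyapunov function W is nonincreasing along trajectories of the closed-loop system: with P = diag(K^ω(K^V)^{−1}M^{−1}, V^nom·C, I_n, Sᵀ L_φ S) and E = C^{−1}, the matrix −(P A + Aᵀ P) is positive semidefinite, i.e., xᵀ P A x ≤ 0 for all x ∈ ℝ^{3n+(n−1)}. -/

import Mathlib

open Matrix Filter

/-- Index type for the state `(ω̂, V̂, η, φ'')` of dimension `3n + (n-1)`. -/
abbrev Idx (n : ℕ) := (Fin n ⊕ Fin n) ⊕ (Fin n ⊕ Fin (n - 1))

/-- A connected-graph Laplacian: symmetric positive semidefinite, `L 1 = 0`,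
and the kernel is exactly the span of the all-ones vector. -/
def IsConnLaplacian {n : ℕ} (L : Matrix (Fin n) (Fin n) ℝ) : Prop :=
  L.PosSemidef ∧ L *ᵥ (fun _ => (1 : ℝ)) = 0 ∧
    ∀ v : Fin n → ℝ, L *ᵥ v = 0 → ∃ c : ℝ, v = fun _ => c

/-- The closed-loop system matrix `A` of the reduced dynamics
`(ω̂, V̂, η, φ'')`. -/
noncomputable def closedLoopA {n : ℕ}
    (M E Kw KV Kd KdI LR Leta Lphi : Matrix (Fin n) (Fin n) ℝ)
    (S : Matrix (Fin n) (Fin (n - 1)) ℝ) (Vnom γ : ℝ) :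
    Matrix (Idx n) (Idx n) ℝ :=
  Matrix.fromBlocks
    (Matrix.fromBlocks
      (-(M * (Kd + Kw))) (M * KV)
      ((1 / Vnom) • (E * Kw)) (-(E * (LR + (1 / Vnom) • KV))))
    (Matrix.fromBlocks
      (-(M * (KV * Kw⁻¹ * KdI))) (-(M * (Lphi * S)))
      0 ((1 / Vnom) • (E * (Lphi * S))))
    (Matrix.fromBlocks
      KdI 0
      (Sᵀ * KV⁻¹ * Kw) 0)
    (Matrix.fromBlocks
      (-Leta) 0
      0 (-(γ • (1 : Matrix (Fin (n - 1)) (Fin (n - 1)) ℝ))))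


/-- The block-diagonal matrix `P = diag(K^ω (K^V)⁻¹ M⁻¹, V^nom C, I, Sᵀ L_φ S)`
of the Lyapunov function `W(x) = ½ xᵀ P x`. -/
noncomputable def lyapP {n : ℕ}
    (M C Kw KV Lphi : Matrix (Fin n) (Fin n) ℝ)
    (S : Matrix (Fin n) (Fin (n - 1)) ℝ) (Vnom : ℝ) :
    Matrix (Idx n) (Idx n) ℝ :=
  Matrix.fromBlocks
    (Matrix.fromBlocks (Kw * KV⁻¹ * M⁻¹) 0 0 (Vnom • C))
    0 0
    (Matrix.fromBlocks 1 0 0 (Sᵀ * Lphi * S))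

/-! In the coordinates `x = (ω̂, V̂, η, φ'')`, with `u = S φ''`, the `η`–`ω̂` couplings of `P A` are
skew and cancel in `xᵀ P A x`; so do the `φ''`–`ω̂` couplings, because `S Sᵀ = I - 𝟙𝟙ᵀ/n`
(`S` is an orthonormal basis of `𝟙⊥`) and `L_φ 𝟙 = 0`. What is left is
`-∑ᵢ (kᵢ^ω kᵢ^droop ω̂ᵢ² + (kᵢ^ω ω̂ᵢ - kᵢ^V V̂ᵢ)²) / kᵢ^V - ηᵀ L_η η
  - (V^nom V̂ᵀ L_R V̂ - k_φ V̂ᵀ L_R u + γ k_φ uᵀ L_R u)`.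
The first two terms are nonpositive by positivity of the gains and of `L_η`; the last bracket is
the tensor product of `L_R ≥ 0` with the scalar form `V^nom s² - k_φ s t + γ k_φ t²`, which is
nonnegative because `k_φ² ≤ 4 V^nom γ k_φ` (Assumption 2). -/

theorem inv_diagonal_of_ne_zero {ι K : Type*} [Fintype ι] [DecidableEq ι] [Field K] {d : ι → K}
    (hd : ∀ i, d i ≠ 0) : (diagonal d)⁻¹ = diagonal d⁻¹ := by
  refine inv_eq_right_inv ?_
  rw [diagonal_mul_diagonal, ← diagonal_one]
  exact congrArg diagonal (funext fun i => mul_inv_cancel₀ (hd i))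

theorem diagonal_mulVec_eq_mul {ι α : Type*} [Fintype ι] [DecidableEq ι]
    [NonUnitalNonAssocSemiring α] (d w : ι → α) :
    diagonal d *ᵥ w = d * w :=
  funext (mulVec_diagonal d w)

theorem vecMul_diagonal_eq_mul {ι α : Type*} [Fintype ι] [DecidableEq ι]
    [NonUnitalNonAssocSemiring α] (d w : ι → α) :
    w ᵥ* diagonal d = w * d :=
  funext (vecMul_diagonal w d)

theorem posSemidef_neg_add_transpose_iff {ι : Type*} [Fintype ι] (B : Matrix ι ι ℝ) :
    (-(B + Bᵀ)).PosSemidef ↔ ∀ x, x ⬝ᵥ B *ᵥ x ≤ 0 := by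
  have hquad : ∀ x, x ⬝ᵥ Bᵀ *ᵥ x = x ⬝ᵥ B *ᵥ x := fun x => by
    rw [dotProduct_mulVec, vecMul_transpose, dotProduct_comm]
  have hherm : (-(B + Bᵀ)).IsHermitian := by
    simp only [IsHermitian, conjTranspose_eq_transpose_of_trivial, transpose_neg, transpose_add,
      transpose_transpose, add_comm]
  simp only [posSemidef_iff_dotProduct_mulVec, hherm, true_and, star_trivial, neg_mulVec,
    add_mulVec, dotProduct_neg, dotProduct_add, hquad, neg_nonneg]
  exact forall_congr' fun x => by constructor <;> intro h <;> linarith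

theorem Matrix.PosSemidef.pair_quadratic_nonneg {ι : Type*} [Fintype ι] {L : Matrix ι ι ℝ}
    (hL : L.PosSemidef) {α β δ : ℝ} (hα : 0 < α) (hβ : β ^ 2 ≤ 4 * α * δ) (v u : ι → ℝ) :
    0 ≤ α * (v ⬝ᵥ L *ᵥ v) - β * (v ⬝ᵥ L *ᵥ u) + δ * (u ⬝ᵥ L *ᵥ u) := by
  have hLt : Lᵀ = L := by rw [← conjTranspose_eq_transpose_of_trivial, hL.isHermitian.eq]
  have hsymm : u ⬝ᵥ L *ᵥ v = v ⬝ᵥ L *ᵥ u := by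
    rw [dotProduct_mulVec, ← mulVec_transpose, hLt, dotProduct_comm]
  have hw := hL.dotProduct_mulVec_nonneg ((2 * α) • v - β • u)
  have hu := hL.dotProduct_mulVec_nonneg u
  simp only [star_trivial, mulVec_sub, mulVec_smul, dotProduct_sub, sub_dotProduct,
    dotProduct_smul, smul_dotProduct, smul_eq_mul, hsymm] at hw hu
  -- `4α · (form) = (2αv - βu)ᵀL(2αv - βu) + (4αδ - β²) uᵀLu`
  nlinarith [mul_nonneg (sub_nonneg.2 hβ) hu]

theorem mul_transpose_eq_one_sub {ι κ : Type*} [Fintype ι] [Fintype κ] [DecidableEq ι]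
    [DecidableEq κ] (S : Matrix ι κ ℝ) (hS : Sᵀ * S = 1) (hS1 : Sᵀ *ᵥ (fun _ => 1) = 0)
    (hcard : Fintype.card κ + 1 = Fintype.card ι) :
    S * Sᵀ = 1 - (Fintype.card ι : ℝ)⁻¹ • Matrix.of (fun _ _ => 1) := by
  set J : Matrix ι ι ℝ := (Fintype.card ι : ℝ)⁻¹ • Matrix.of (fun _ _ => 1)
  have hι : (Fintype.card ι : ℝ) ≠ 0 := by rw [← hcard]; positivity
  have hStJ : Sᵀ * J = 0 := by
    ext i j
    have hcol : ∑ k, S k i = 0 := by simpa [mulVec, dotProduct] using congrFun hS1 i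
    simp [J, mul_apply, ← Finset.sum_mul, hcol]
  have hJJ : J * J = J := by
    ext i j
    simp only [J, smul_of, mul_apply, of_apply, Pi.smul_apply, smul_eq_mul, mul_one,
      Finset.sum_const, Finset.card_univ, nsmul_eq_mul]
    field_simp
  have hJt : Jᵀ = J := by ext; simp [J]
  have hJS : J * S = 0 := by
    simpa [Matrix.transpose_mul, hJt] using congrArg transpose hStJ
  -- `Q` is a symmetric idempotent of trace `card ι - card κ - 1 = 0`, hence zero
  set Q := 1 - S * Sᵀ - J
  have hQt : Qᵀ = Q := by simp [Q, hJt, Matrix.transpose_mul]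
  have hQQ : Q * Q = Q := by
    simp only [Q, Matrix.sub_mul, Matrix.mul_sub, Matrix.one_mul, Matrix.mul_one,
      Matrix.mul_assoc, hStJ, ← Matrix.mul_assoc J, hJS, ← Matrix.mul_assoc Sᵀ S, hS, hJJ]
    simp
  have htr : Q.trace = 0 := by
    have hJtr : J.trace = 1 := by
      simp only [J, trace, smul_of, diag_apply, of_apply, Pi.smul_apply, smul_eq_mul, mul_one,
        Finset.sum_const, Finset.card_univ, nsmul_eq_mul]
      field_simp
    simp [Q, trace_sub, trace_mul_comm S, hS, hJtr, ← hcard]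
  have hQ : Q = 0 := by
    rw [← trace_conjTranspose_mul_self_eq_zero_iff, conjTranspose_eq_transpose_of_trivial, hQt,
      hQQ, htr]
  calc S * Sᵀ = 1 - J - Q := by simp only [Q]; abel
    _ = 1 - J := by rw [hQ, sub_zero]

theorem mul_mul_transpose_eq_self {ι κ : Type*} [Fintype ι] [Fintype κ] [DecidableEq ι]
    [DecidableEq κ] {L : Matrix ι ι ℝ} (hL1 : L *ᵥ (fun _ => 1) = 0) (S : Matrix ι κ ℝ)
    (hS : Sᵀ * S = 1) (hS1 : Sᵀ *ᵥ (fun _ => 1) = 0)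
    (hcard : Fintype.card κ + 1 = Fintype.card ι) :
    L * (S * Sᵀ) = L := by
  have hLJ : L * Matrix.of (fun _ _ => (1 : ℝ)) = 0 := by
    ext i j
    simpa [mul_apply, mulVec, dotProduct] using congrFun hL1 i
  rw [mul_transpose_eq_one_sub S hS hS1 hcard, Matrix.mul_sub, Matrix.mul_smul, hLJ, smul_zero,
    sub_zero, Matrix.mul_one]

theorem lyapP_transpose {n : ℕ} (m c kw kv : Fin n → ℝ) {Lphi : Matrix (Fin n) (Fin n) ℝ}
    (hLphi : Lphiᵀ = Lphi) (S : Matrix (Fin n) (Fin (n - 1)) ℝ) (Vnom : ℝ) :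
    (lyapP (diagonal m) (diagonal c) (diagonal kw) (diagonal kv) Lphi S Vnom)ᵀ =
      lyapP (diagonal m) (diagonal c) (diagonal kw) (diagonal kv) Lphi S Vnom := by
  simp only [lyapP, fromBlocks_transpose, transpose_zero, transpose_one, transpose_smul,
    diagonal_transpose, inv_diagonal, diagonal_mul_diagonal, transpose_mul, transpose_transpose,
    hLphi, Matrix.mul_assoc]

theorem dotProduct_lyapP_mul_closedLoopA_mulVec {n : ℕ} (m c kw kv kd kdi : Fin n → ℝ)
    (hm : ∀ i, m i ≠ 0) (hc : ∀ i, c i ≠ 0) (hkw : ∀ i, kw i ≠ 0) (hkv : ∀ i, kv i ≠ 0)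
    (LR Leta : Matrix (Fin n) (Fin n) ℝ) {Lphi : Matrix (Fin n) (Fin n) ℝ}
    (S : Matrix (Fin n) (Fin (n - 1)) ℝ) (hLphi : Lphiᵀ = Lphi)
    (hLphiS : Lphi * (S * Sᵀ) = Lphi) {Vnom : ℝ} (hVnom : Vnom ≠ 0) (γ : ℝ)
    (ω v η : Fin n → ℝ) (φ : Fin (n - 1) → ℝ) :
    ((ω ⊕ᵥ v) ⊕ᵥ (η ⊕ᵥ φ)) ⬝ᵥ
      ((lyapP (diagonal m) (diagonal c) (diagonal kw) (diagonal kv) Lphi S Vnom *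
        closedLoopA (diagonal m) (diagonal c)⁻¹ (diagonal kw) (diagonal kv) (diagonal kd)
          (diagonal kdi) LR Leta Lphi S Vnom γ) *ᵥ ((ω ⊕ᵥ v) ⊕ᵥ (η ⊕ᵥ φ))) =
      -∑ i, (kw i * kd i / kv i * ω i ^ 2 + (kw i * ω i - kv i * v i) ^ 2 / kv i)
        - η ⬝ᵥ Leta *ᵥ η
        - (Vnom * (v ⬝ᵥ LR *ᵥ v) - v ⬝ᵥ Lphi *ᵥ (S *ᵥ φ)
            + γ * ((S *ᵥ φ) ⬝ᵥ Lphi *ᵥ (S *ᵥ φ))) := by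
  rw [← mulVec_mulVec, dotProduct_mulVec]
  simp only [lyapP, closedLoopA, vecMul_fromBlocks, fromBlocks_mulVec, sumElim_dotProduct_sumElim,
    Sum.elim_comp_inl, Sum.elim_comp_inr, vecMul_zero, zero_mulVec, add_zero, zero_add, vecMul_one,
    dotProduct_add, neg_mulVec, smul_mulVec, ← mulVec_mulVec, ← vecMul_vecMul, add_mulVec,
    mulVec_add, dotProduct_neg, dotProduct_smul, mulVec_smul, one_mulVec]
  set u := S *ᵥ φ
  have hφ : φ ᵥ* Sᵀ ᵥ* Lphi ᵥ* S = u ᵥ* Lphi ᵥ* S := by rw [vecMul_transpose]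
  have hφS : ∀ y, φ ᵥ* Sᵀ ᵥ* Lphi ᵥ* S ⬝ᵥ Sᵀ *ᵥ y = u ⬝ᵥ Lphi *ᵥ y := fun y => by
    rw [hφ, dotProduct_mulVec, vecMul_vecMul, vecMul_vecMul, hLphiS, ← dotProduct_mulVec]
  have hφφ : φ ᵥ* Sᵀ ᵥ* Lphi ᵥ* S ⬝ᵥ φ = u ⬝ᵥ Lphi *ᵥ u := by
    rw [hφ, ← dotProduct_mulVec, ← dotProduct_mulVec]
  have hswap : u ⬝ᵥ Lphi *ᵥ (kv⁻¹ * (kw * ω)) = (kv⁻¹ * (kw * ω)) ⬝ᵥ Lphi *ᵥ u := by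
    rw [dotProduct_mulVec, ← hLphi, vecMul_transpose, dotProduct_comm, hLphi]
  simp only [hφS, hφφ, inv_diagonal_of_ne_zero hm, inv_diagonal_of_ne_zero hc,
    inv_diagonal_of_ne_zero hkv, inv_diagonal_of_ne_zero hkw, diagonal_mulVec_eq_mul,
    vecMul_diagonal_eq_mul, vecMul_smul, hswap]
  generalize Lphi *ᵥ u = p
  generalize LR *ᵥ v = q
  generalize Leta *ᵥ η = r
  simp only [dotProduct, Pi.mul_apply, Pi.inv_apply, Pi.smul_apply, smul_eq_mul, Finset.mul_sum,
    ← Finset.sum_neg_distrib, ← Finset.sum_add_distrib, ← Finset.sum_sub_distrib]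
  refine Finset.sum_congr rfl fun i _ => ?_
  have := hm i; have := hc i; have := hkw i; have := hkv i
  field_simp
  ring

theorem dotProduct_lyapP_mul_closedLoopA_mulVec_nonpos {n : ℕ} (m c kw kv kd kdi : Fin n → ℝ)
    (hm : ∀ i, m i ≠ 0) (hc : ∀ i, c i ≠ 0) (hkw : ∀ i, 0 < kw i) (hkv : ∀ i, 0 < kv i)
    (hkd : ∀ i, 0 < kd i) {LR Leta : Matrix (Fin n) (Fin n) ℝ} (hLR : LR.PosSemidef)
    (hLeta : Leta.PosSemidef) (S : Matrix (Fin n) (Fin (n - 1)) ℝ)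
    (hLRS : LR * (S * Sᵀ) = LR) {Vnom γ kphi : ℝ} (hVnom : 0 < Vnom)
    (hgain : kphi ^ 2 ≤ 4 * Vnom * (γ * kphi)) (x : Idx n → ℝ) :
    x ⬝ᵥ ((lyapP (diagonal m) (diagonal c) (diagonal kw) (diagonal kv) (kphi • LR) S Vnom *
      closedLoopA (diagonal m) (diagonal c)⁻¹ (diagonal kw) (diagonal kv) (diagonal kd)
        (diagonal kdi) LR Leta (kphi • LR) S Vnom γ) *ᵥ x) ≤ 0 := by
  have hLRt : LRᵀ = LR := by rw [← conjTranspose_eq_transpose_of_trivial, hLR.isHermitian.eq]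
  obtain ⟨ω, v, η, φ, rfl⟩ : ∃ ω v η φ, x = (ω ⊕ᵥ v) ⊕ᵥ (η ⊕ᵥ φ) :=
    ⟨_, _, _, _, by rw [Sum.elim_comp_inl_inr, Sum.elim_comp_inl_inr, Sum.elim_comp_inl_inr]⟩
  rw [dotProduct_lyapP_mul_closedLoopA_mulVec m c kw kv kd kdi hm hc (fun i => (hkw i).ne')
    (fun i => (hkv i).ne') LR Leta S (by rw [transpose_smul, hLRt])
    (by rw [Matrix.smul_mul, hLRS]) hVnom.ne']
  have hdiag : 0 ≤ ∑ i, (kw i * kd i / kv i * ω i ^ 2 + (kw i * ω i - kv i * v i) ^ 2 / kv i) :=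
    Finset.sum_nonneg fun i _ => by have := hkw i; have := hkd i; have := hkv i; positivity
  have hη : 0 ≤ η ⬝ᵥ Leta *ᵥ η := hLeta.dotProduct_mulVec_nonneg η
  have hcross := hLR.pair_quadratic_nonneg hVnom hgain v (S *ᵥ φ)
  simp only [smul_mulVec, dotProduct_smul, smul_eq_mul]
  linarith

theorem stmt_4_general {n : ℕ} (hn : 2 ≤ n)
    (m c kw kv kd kdi : Fin n → ℝ)
    (hm : ∀ i, 0 < m i) (hc : ∀ i, 0 < c i) (hkw : ∀ i, 0 < kw i)
    (hkv : ∀ i, 0 < kv i) (hkd : ∀ i, 0 < kd i)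
    (E : Matrix (Fin n) (Fin n) ℝ) (hE : E = (Matrix.diagonal c)⁻¹)
    (LR Leta Lphi : Matrix (Fin n) (Fin n) ℝ)
    (hLR : IsConnLaplacian LR) (hLeta : IsConnLaplacian Leta)
    (S : Matrix (Fin n) (Fin (n - 1)) ℝ)
    (hS : Sᵀ * S = 1) (hS1 : Sᵀ *ᵥ (fun _ => (1 : ℝ)) = 0)
    (Vnom γ kphi : ℝ) (hVnom : 0 < Vnom) (hkphi : 0 < kphi)
    -- Assumption 1
    (hass1 : Lphi = kphi • LR)
    -- Assumption 2
    (hass2 : γ > kphi / (4 * Vnom))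
    (A : Matrix (Idx n) (Idx n) ℝ)
    (hA : A = closedLoopA (Matrix.diagonal m) E
      (Matrix.diagonal kw) (Matrix.diagonal kv) (Matrix.diagonal kd)
      (Matrix.diagonal kdi) LR Leta Lphi S Vnom γ)
    (P : Matrix (Idx n) (Idx n) ℝ)
    (hP : P = lyapP (Matrix.diagonal m) (Matrix.diagonal c)
      (Matrix.diagonal kw) (Matrix.diagonal kv) Lphi S Vnom) :
    (-(P * A + Aᵀ * P)).PosSemidef ∧
      ∀ x : Idx n → ℝ, x ⬝ᵥ ((P * A) *ᵥ x) ≤ 0 := by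
  subst hA hP hE hass1
  obtain ⟨hLR, hLR1, -⟩ : LR.PosSemidef ∧ LR *ᵥ (fun _ => 1) = 0 ∧ _ := hLR
  have hLRS : LR * (S * Sᵀ) = LR := mul_mul_transpose_eq_self hLR1 S hS hS1 (by simp; omega)
  have hgain : kphi ^ 2 ≤ 4 * Vnom * (γ * kphi) := by
    have := (div_lt_iff₀ (by positivity)).1 hass2
    nlinarith
  have hdecay := dotProduct_lyapP_mul_closedLoopA_mulVec_nonpos m c kw kv kd kdi
    (fun i => (hm i).ne') (fun i => (hc i).ne') hkw hkv hkd hLR hLeta.1 S hLRS hVnom hgain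
  have hPt := lyapP_transpose m c kw kv (Lphi := kphi • LR)
    (by rw [transpose_smul, ← conjTranspose_eq_transpose_of_trivial, hLR.isHermitian.eq]) S Vnom
  rw [← hPt, ← transpose_mul, hPt]
  exact ⟨(posSemidef_neg_add_transpose_iff _).2 hdecay, hdecay⟩

/-- Under Assumptions 1 and 2 (with `E = C⁻¹`), the Lyapunov function is
nonincreasing along trajectories: `−(P A + Aᵀ P)` is positive semidefinite,
i.e. `xᵀ P A x ≤ 0` for all `x`. -/
theorem stmt_4 {n : ℕ} (hn : 2 ≤ n)
    (m c kw kv kd kdi : Fin n → ℝ)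
    (hm : ∀ i, 0 < m i) (hc : ∀ i, 0 < c i) (hkw : ∀ i, 0 < kw i)
    (hkv : ∀ i, 0 < kv i) (hkd : ∀ i, 0 < kd i) (hkdi : ∀ i, 0 < kdi i)
    (E : Matrix (Fin n) (Fin n) ℝ) (hE : E = (Matrix.diagonal c)⁻¹)
    (LR Leta Lphi : Matrix (Fin n) (Fin n) ℝ)
    (hLR : IsConnLaplacian LR) (hLeta : IsConnLaplacian Leta)
    (hLphi : IsConnLaplacian Lphi)
    (S : Matrix (Fin n) (Fin (n - 1)) ℝ)
    (hS : Sᵀ * S = 1) (hS1 : Sᵀ *ᵥ (fun _ => (1 : ℝ)) = 0)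
    (Vnom γ kphi : ℝ) (hVnom : 0 < Vnom) (hγ : 0 < γ) (hkphi : 0 < kphi)
    -- Assumption 1
    (hass1 : Lphi = kphi • LR)
    -- Assumption 2
    (hass2 : γ > kphi / (4 * Vnom))
    (A : Matrix (Idx n) (Idx n) ℝ)
    (hA : A = closedLoopA (Matrix.diagonal m) E
      (Matrix.diagonal kw) (Matrix.diagonal kv) (Matrix.diagonal kd)
      (Matrix.diagonal kdi) LR Leta Lphi S Vnom γ)
    (P : Matrix (Idx n) (Idx n) ℝ)
    (hP : P = lyapP (Matrix.diagonal m) (Matrix.diagonal c)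
      (Matrix.diagonal kw) (Matrix.diagonal kv) Lphi S Vnom) :
    (-(P * A + Aᵀ * P)).PosSemidef ∧
      ∀ x : Idx n → ℝ, x ⬝ᵥ ((P * A) *ᵥ x) ≤ 0 :=
  stmt_4_general hn m c kw kv kd kdi hm hc hkw hkv hkd E hE LR Leta Lphi hLR hLeta S hS hS1 Vnom γ
    kphi hVnom hkphi hass1 hass2 A hA P hP
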